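/- Let G be a connected graph. A vertex w of G has at most one child in every search tree on G if and only if w is a simplicial vertex of G (i.e., the open neighborhood of w induces a clique in G). -/

import Mathlib

open scoped Classical

universe u

variable {V : Type u}

/-- A rooted tree structure on a support set: data only, well-formedness is `RTree.WF`. -/
structure RTree (V : Type u) where
  supp : Set V
  root : V
  parent : V → Option V

namespace RTree

def parentRel (T : RTree V) (a b : V) : Prop := T.parent a = some b

/-- `u` is an ancestor of `v` in `T` (reflexively). -/
def isAncestor (T : RTree V) (u v : V) : Prop :=
  Relation.ReflTransGen T.parentRel v u

def WF (T : RTree V) : Prop :=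
  T.root ∈ T.supp ∧
  T.parent T.root = none ∧
  (∀ v, v ∉ T.supp → T.parent v = none) ∧
  (∀ v ∈ T.supp, v ≠ T.root → ∃ u ∈ T.supp, T.parent v = some u) ∧
  (∀ v ∈ T.supp, T.isAncestor T.root v)

/-- The vertex set of the subtree `T|c` rooted at `c`. -/
def descendants (T : RTree V) (c : V) : Set V :=
  {v | v ∈ T.supp ∧ T.isAncestor c v}

/-- Iterated parent. -/
def pIter (T : RTree V) : ℕ → V → Option V
  | 0, w => some w
  | n + 1, w => (T.parent w).bind (T.pIter n)

/-- The depth `d_{T,v}` of `v` in `T` (distance to the root). -/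
noncomputable def depthOf (T : RTree V) (v : V) : ℕ :=
  sInf {n | T.pIter n v = some T.root}

/-- The subtree of `T` rooted at `c`. -/
noncomputable def subtreeAt (T : RTree V) (c : V) : RTree V where
  supp := T.descendants c
  root := c
  parent := fun w => if w = c then none else if w ∈ T.descendants c then T.parent w else none

/-- The vertex at depth `i` on the path from the root to `v`. -/
noncomputable def ancAt (T : RTree V) (v : V) (i : ℕ) : V :=
  (T.pIter (T.depthOf v - i) v).getD T.root

/-- Insertion `T(i,x,v)` of a new vertex `x` at depth `i` along the root-to-`v` path:
`i = 0` makes `x` the new root, `i = d_{T,v}+1` adds `x` as a new child of `v`, and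
for `1 ≤ i ≤ d_{T,v}` the `i`-th edge of the root-to-`v` path is subdivided by `x`. -/
noncomputable def insertAt (T : RTree V) (i : ℕ) (x v : V) : RTree V :=
  if i = 0 then
    { supp := insert x T.supp
      root := x
      parent := fun w => if w = x then none else if w = T.root then some x else T.parent w }
  else if i = T.depthOf v + 1 then
    { supp := insert x T.supp
      root := T.root
      parent := fun w => if w = x then some v else T.parent w }
  else
    { supp := insert x T.supp
      root := T.root
      parent := fun w =>
        if w = x then some (T.ancAt v (i - 1))
        else if w = T.ancAt v i then some x
        else T.parent w }

/-- Elimination `p(T,x)` of a vertex `x` (meaningful when `x` has at most one child). -/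
noncomputable def elim (T : RTree V) (x : V) : RTree V where
  supp := T.supp \ {x}
  root :=
    if T.root = x then (if h : ∃ w, T.parent w = some x then h.choose else T.root) else T.root
  parent := fun w =>
    if w = x then none
    else if T.parent w = some x then T.parent x
    else T.parent w

end RTree

/-- Reachability inside the vertex set `s`, i.e. in the induced subgraph `G[s]`. -/
def reachWithin (G : SimpleGraph V) (s : Set V) : V → V → Prop :=
  Relation.ReflTransGen (fun a b => a ∈ s ∧ b ∈ s ∧ G.Adj a b)

/-- Recursive definition of a search tree: the children of the root are the roots of
search trees on the connected components of the graph minus the root. -/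
inductive IsSearchTreeRec {V : Type u} (G : SimpleGraph V) : RTree V → Prop
  | intro (T : RTree V) (hwf : T.WF)
      (hconn : ∀ a ∈ T.supp, ∀ b ∈ T.supp, reachWithin G T.supp a b)
      (hcomp : ∀ c, T.parent c = some T.root →
        ∀ w, w ∈ T.descendants c ↔
          (w ∈ T.supp ∧ w ≠ T.root ∧ reachWithin G (T.supp \ {T.root}) c w))
      (hrec : ∀ c, T.parent c = some T.root → IsSearchTreeRec G (T.subtreeAt c)) :
      IsSearchTreeRec G T

/-- `T` is a search tree on the induced subgraph `G[s]`. -/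
def IsSearchTreeOn (G : SimpleGraph V) (s : Set V) (T : RTree V) : Prop :=
  T.supp = s ∧ IsSearchTreeRec G T

/-- `T` is a search tree on `G`. -/
def IsSearchTree (G : SimpleGraph V) (T : RTree V) : Prop :=
  IsSearchTreeOn G Set.univ T

/-- The `uv`-rotation of `T` (for `v` a child of `u`): `u` becomes a child of `v`, `v` takes
`u`'s old parent, and each subtree `S` of `v` is reattached below `u` iff `u` has a
`G`-neighbour in `S`. -/
noncomputable def rotate (G : SimpleGraph V) (T : RTree V) (u v : V) : RTree V where
  supp := T.supp
  root := if T.root = u then v else T.root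
  parent := fun w =>
    if w = v then T.parent u
    else if w = u then some v
    else if T.parent w = some v then
      (if ∃ z ∈ T.descendants w, G.Adj u z then some u else some v)
    else T.parent w

def IsRotation (G : SimpleGraph V) (S S' : RTree V) : Prop :=
  ∃ u v, S.parent v = some u ∧ S' = rotate G S u v

def rotAdj (G : SimpleGraph V) (S S' : RTree V) : Prop :=
  S ≠ S' ∧ (IsRotation G S S' ∨ IsRotation G S' S)

/-- The rotation graph of the induced subgraph `G[s]`: vertices are the search trees on
`G[s]`, two trees being adjacent iff they differ by a single rotation. -/
def rotationGraphOn (G : SimpleGraph V) (s : Set V) :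
    SimpleGraph {T : RTree V // IsSearchTreeOn G s T} where
  Adj T T' := rotAdj G T.1 T'.1
  symm := ⟨fun T T' h => ⟨Ne.symm h.1, Or.symm h.2⟩⟩
  loopless := ⟨fun T h => h.1 rfl⟩

/-- A vertex of `K` of maximal depth in `T` (the vertex `v_{λ(T)}`). -/
noncomputable def deepestIn (T : RTree V) (K : Set V) : V :=
  if h : ∃ u, u ∈ K ∧ ∀ w ∈ K, T.depthOf w ≤ T.depthOf u then h.choose else T.root

/-- `u` and `v` have different relative order in `T` and `T'`. -/
def diffRelOrder (T T' : RTree V) (u v : V) : Prop :=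
  (T.isAncestor u v ∧ ¬ T'.isAncestor u v) ∨ (¬ T.isAncestor u v ∧ T'.isAncestor u v)

/-- The step from `S` to `S'` is a rotation of the pair `u`, `v`. -/
def isUVStep (G : SimpleGraph V) (u v : V) (S S' : RTree V) : Prop :=
  (S.parent v = some u ∧ S' = rotate G S u v) ∨ (S.parent u = some v ∧ S' = rotate G S v u)

/-- A threshold graph: obtainable from the one-vertex graph by repeatedly adding either an
isolated vertex or a universal vertex. -/
def IsThresholdGraph {V : Type u} [Fintype V] (G : SimpleGraph V) : Prop :=
  ∃ e : Fin (Fintype.card V) ≃ V,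
    ∀ i : Fin (Fintype.card V),
      (∀ j, j < i → ¬ G.Adj (e i) (e j)) ∨ (∀ j, j < i → G.Adj (e i) (e j))

/-- The complete split graph `SPK_{p,q}`: a clique of size `p` completely joined to an
independent set of size `q`. -/
def completeSplitGraph (p q : ℕ) : SimpleGraph (Fin p ⊕ Fin q) where
  Adj a b := a ≠ b ∧ (a.isLeft = true ∨ b.isLeft = true)
  symm := ⟨fun a b h => ⟨Ne.symm h.1, Or.symm h.2⟩⟩
  loopless := ⟨fun a h => h.1 rfl⟩


/-!
If `w` is simplicial, a path through `w` can be short-cut past it, so the neighbours of `w` stay in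
one component of `G - w`. Hence when `w` is the root of a search tree of a connected graph it has
a single child, and otherwise `w` lies in the subtree of one child of the root and we recurse.

Conversely, let `a`, `b` be non-adjacent neighbours of `w`. On `{w, a, b}` the star rooted at `w`
is a search tree. It extends to a search tree on `G` by always deleting a vertex outside
`{w, a, b}` first: then `{w, a, b}` stays inside one component, on which we recurse, and the
children `a`, `b` of `w` survive.
-/

open Relation

section Reach

variable {G : SimpleGraph V} {s t : Set V} {a b c v : V}

theorem reachWithin_symm (h : reachWithin G s a b) : reachWithin G s b a := by
  induction h with
  | refl => exact .refl
  | tail _ hbc ih => exact .head ⟨hbc.2.1, hbc.1, hbc.2.2.symm⟩ ih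

theorem reachWithin_mono (hst : s ⊆ t) (h : reachWithin G s a b) : reachWithin G t a b :=
  ReflTransGen.mono (fun _ _ h => ⟨hst h.1, hst h.2.1, h.2.2⟩) _ _ h

def PreconnectedWithin (G : SimpleGraph V) (s : Set V) : Prop :=
  ∀ a ∈ s, ∀ b ∈ s, reachWithin G s a b

theorem SimpleGraph.Preconnected.preconnectedWithin_univ (hG : G.Preconnected) :
    PreconnectedWithin G Set.univ := fun a _ b _ =>
  ReflTransGen.mono (fun _ _ h => ⟨trivial, trivial, h⟩) _ _
    ((SimpleGraph.reachable_iff_reflTransGen a b).1 (hG a b))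

def componentWithin (G : SimpleGraph V) (t : Set V) (c : V) : Set V :=
  {v | v ∈ t ∧ reachWithin G t c v}

theorem mem_componentWithin_self (hc : c ∈ t) : c ∈ componentWithin G t c := ⟨hc, .refl⟩

theorem componentWithin_subset : componentWithin G t c ⊆ t := fun _ h => h.1

theorem componentWithin_eq_of_mem (hv : v ∈ componentWithin G t c) :
    componentWithin G t v = componentWithin G t c := by
  ext z
  exact ⟨fun hz => ⟨hz.1, hv.2.trans hz.2⟩,
    fun hz => ⟨hz.1, (reachWithin_symm hv.2).trans hz.2⟩⟩

theorem reachWithin_componentWithin (h : reachWithin G t a b)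
    (ha : a ∈ componentWithin G t c) : reachWithin G (componentWithin G t c) a b := by
  induction h using ReflTransGen.head_induction_on with
  | refl => exact .refl
  | head hstep _ ih =>
    have hmem : _ ∈ componentWithin G t c := ⟨hstep.2.1, ha.2.tail hstep⟩
    exact .head ⟨ha, hmem, hstep.2.2⟩ (ih hmem)

theorem preconnectedWithin_componentWithin :
    PreconnectedWithin G (componentWithin G t c) := fun _ ha _ hb =>
  reachWithin_componentWithin ((reachWithin_symm ha.2).trans hb.2) ha

theorem componentWithin_eq_singleton (hv : v ∈ t)
    (hind : ∀ x ∈ t, ∀ y ∈ t, ¬ G.Adj x y) : componentWithin G t v = {v} := by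
  refine Set.Subset.antisymm (fun z hz => ?_)
    (Set.singleton_subset_iff.2 (mem_componentWithin_self hv))
  rcases hz.2.cases_head with rfl | ⟨_, hstep, -⟩
  · rfl
  · exact absurd hstep.2.2 (hind _ hstep.1 _ hstep.2.1)

end Reach

namespace RTree

variable {T : RTree V} {c x y : V}

theorem WF.mem_of_parent_eq_some (hT : T.WF) (h : T.parent x = some y) :
    x ∈ T.supp ∧ y ∈ T.supp ∧ x ≠ T.root := by
  have hx : x ∈ T.supp := by
    by_contra hx
    simp [hT.2.2.1 x hx] at h
  have hxr : x ≠ T.root := by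
    rintro rfl
    simp [hT.2.1] at h
  obtain ⟨u, hu, hpu⟩ := hT.2.2.2.1 x hx hxr
  rw [hpu, Option.some_inj] at h
  exact ⟨hx, h ▸ hu, hxr⟩

theorem WF.parent_eq_none_iff (hT : T.WF) (hx : x ∈ T.supp) :
    T.parent x = none ↔ x = T.root := by
  refine ⟨fun h => ?_, fun h => h ▸ hT.2.1⟩
  by_contra hxr
  obtain ⟨u, -, hu⟩ := hT.2.2.2.1 x hx hxr
  simp [hu] at h

theorem WF.exists_isAncestor_of_parent_eq_root (hT : T.WF) (hx : x ∈ T.supp)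
    (hxr : x ≠ T.root) : ∃ c, T.parent c = some T.root ∧ T.isAncestor c x := by
  rcases (hT.2.2.2.2 x hx).cases_tail with h | ⟨c, hxc, hc⟩
  · exact absurd h.symm hxr
  · exact ⟨c, hc, hxc⟩

theorem subtreeAt_parent (hxc : x ≠ c) (hx : x ∈ T.descendants c) :
    (T.subtreeAt c).parent x = T.parent x := by
  simp [subtreeAt, hxc, hx]

end RTree

theorem IsSearchTreeRec.wf {G : SimpleGraph V} {T : RTree V} (hT : IsSearchTreeRec G T) :
    T.WF := by
  cases hT with | intro _ hwf _ _ _ => exact hwf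

theorem IsSearchTreeRec.preconnectedWithin {G : SimpleGraph V} {T : RTree V}
    (hT : IsSearchTreeRec G T) : PreconnectedWithin G T.supp := by
  cases hT with | intro _ _ hconn _ _ => exact hconn

section Simplicial

variable {G : SimpleGraph V} {w : V}

theorem reachWithin_diff_singleton_of_simplicial
    (hw : G.IsClique (G.neighborSet w)) {s : Set V} {x y : V} (hxy : reachWithin G s x y)
    (hx : x ≠ w) (hy : y ≠ w) :
    reachWithin G (s \ {w}) x y := by
  -- a path entering `w` may leave it to any neighbour `q` of `w`, as the step before `w` is
  -- adjacent to `q`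
  have key : ∀ z, reachWithin G s x z → (z ≠ w → reachWithin G (s \ {w}) x z) ∧
      (z = w → ∃ q ∈ s, q ≠ w ∧ G.Adj w q ∧ reachWithin G (s \ {w}) x q) := by
    intro z hxz
    induction hxz with
    | refl => exact ⟨fun _ => .refl, fun h => absurd h hx⟩
    | @tail z z' _ hstep ih =>
      obtain ⟨hz, hz', hzz'⟩ := hstep
      refine ⟨fun hz'w => ?_, fun hz'w => ?_⟩
      · by_cases hzw : z = w
        · obtain ⟨q, hq, hqw, hwq, hxq⟩ := ih.2 hzw
          by_cases hqz' : q = z'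
          · exact hqz' ▸ hxq
          · exact hxq.tail ⟨⟨hq, hqw⟩, ⟨hz', hz'w⟩, hw hwq (hzw ▸ hzz') hqz'⟩
        · exact (ih.1 hzw).tail ⟨⟨hz, hzw⟩, ⟨hz', hz'w⟩, hzz'⟩
      · subst hz'w
        exact ⟨z, hz, hzz'.ne, hzz'.symm, ih.1 hzz'.ne⟩
  exact (key y hxy).1 hy

theorem IsSearchTreeRec.eq_of_parent_eq_root_of_reachWithin {T : RTree V}
    (hT : IsSearchTreeRec G T) {a b : V} (ha : T.parent a = some T.root)
    (hb : T.parent b = some T.root) (hab : reachWithin G (T.supp \ {T.root}) a b) : a = b := by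
  obtain ⟨_, hwf, _, hcomp, _⟩ := hT
  have hba : T.isAncestor a b := ((hcomp a ha b).2 ⟨(hwf.mem_of_parent_eq_some hb).1,
    (hwf.mem_of_parent_eq_some hb).2.2, hab⟩).2
  rcases hba.cases_head with h | ⟨c, hbc, hca⟩
  · exact h.symm
  · obtain rfl : c = T.root := Option.some.inj ((hbc : T.parent b = some c).symm.trans hb)
    rcases hca.cases_head with h | ⟨d, hd, -⟩
    · simp [← h, hwf.2.1] at ha
    · simp [RTree.parentRel, hwf.2.1] at hd

theorem IsSearchTreeRec.eq_of_parent_eq_of_simplicial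
    (hw : G.IsClique (G.neighborSet w)) {T : RTree V}
    (hT : IsSearchTreeRec G T) {a b : V} (ha : T.parent a = some w) (hb : T.parent b = some w) :
    a = b := by
  induction hT generalizing a b with
  | intro T hwf hconn hcomp hrec ih =>
  obtain ⟨haT, hwT, har⟩ := hwf.mem_of_parent_eq_some ha
  obtain ⟨hbT, -, hbr⟩ := hwf.mem_of_parent_eq_some hb
  by_cases hwr : w = T.root
  · subst hwr
    exact (IsSearchTreeRec.intro T hwf hconn hcomp hrec).eq_of_parent_eq_root_of_reachWithin ha
      hb (reachWithin_diff_singleton_of_simplicial hw (hconn a haT b hbT) har hbr)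
  · obtain ⟨c, hc, hwc⟩ := hwf.exists_isAncestor_of_parent_eq_root hwT hwr
    have hsub : ∀ x, T.parent x = some w → (T.subtreeAt c).parent x = some w := by
      intro x hx
      have hxc : x ≠ c := by
        rintro rfl
        exact hwr (Option.some.inj (hx.symm.trans hc))
      rw [RTree.subtreeAt_parent hxc
        ⟨(hwf.mem_of_parent_eq_some hx).1, ReflTransGen.head (hx : T.parentRel x w) hwc⟩, hx]
    exact ih c hc (hsub a ha) (hsub b hb)

end Simplicial

attribute [ext] RTree

def RTree.singleton (x : V) : RTree V := ⟨{x}, x, fun _ => none⟩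

theorem isSearchTreeOn_singleton (G : SimpleGraph V) (x : V) :
    IsSearchTreeOn G {x} (RTree.singleton x) := by
  refine ⟨rfl, .intro _ ⟨rfl, rfl, fun _ _ => rfl, fun _ hv hvx => absurd hv hvx, ?_⟩
    ?_ ?_ ?_⟩
  · rintro _ rfl
    exact .refl
  · rintro _ rfl _ rfl
    exact .refl
  · intro _ h
    cases h
  · intro _ h
    cases h

def IsSearchForestOn (G : SimpleGraph V) (t : Set V) (𝒯 : Set V → RTree V) : Prop :=
  ∀ v ∈ t, IsSearchTreeOn G (componentWithin G t v) (𝒯 (componentWithin G t v))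

/-- The trees `𝒯 K` on the components `K` of `G[s \ {r}]` hung below a new root `r`: a vertex
without a parent in its own `𝒯 K` is given the parent `r`. -/
noncomputable def RTree.glue (G : SimpleGraph V) (s : Set V) (r : V) (𝒯 : Set V → RTree V) :
    RTree V where
  supp := s
  root := r
  parent v :=
    if v ∈ s \ {r} then some (((𝒯 (componentWithin G (s \ {r}) v)).parent v).getD r) else none

namespace RTree

variable {G : SimpleGraph V} {s : Set V} {r : V} {𝒯 : Set V → RTree V} {c v x y : V}

theorem glue_parent_of_not_mem (hv : v ∉ s \ {r}) : (glue G s r 𝒯).parent v = none :=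
  if_neg hv

theorem glue_parent_of_mem (hv : v ∈ s \ {r}) :
    (glue G s r 𝒯).parent v =
      some (((𝒯 (componentWithin G (s \ {r}) v)).parent v).getD r) :=
  if_pos hv

theorem glue_parent_of_parent_eq_some (hv : v ∈ s \ {r})
    (h : (𝒯 (componentWithin G (s \ {r}) v)).parent v = some y) :
    (glue G s r 𝒯).parent v = some y := by
  rw [glue_parent_of_mem hv, h, Option.getD_some]

theorem glue_parentRel_of_parentRel (h𝒯 : IsSearchForestOn G (s \ {r}) 𝒯) (hv : v ∈ s \ {r})
    (h : (𝒯 (componentWithin G (s \ {r}) v)).parentRel x y) :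
    (glue G s r 𝒯).parentRel x y := by
  have hx := ((h𝒯 v hv).2.wf.mem_of_parent_eq_some h).1
  rw [(h𝒯 v hv).1] at hx
  rw [← componentWithin_eq_of_mem hx] at h
  exact glue_parent_of_parent_eq_some (componentWithin_subset hx) h

theorem glue_parent_eq_root_iff (h𝒯 : IsSearchForestOn G (s \ {r}) 𝒯) :
    (glue G s r 𝒯).parent c = some r ↔
      c ∈ s \ {r} ∧ c = (𝒯 (componentWithin G (s \ {r}) c)).root := by
  by_cases hc : c ∈ s \ {r}
  · have hwf := (h𝒯 c hc).2.wf
    have hcK := (h𝒯 c hc).1 ▸ mem_componentWithin_self hc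
    rw [glue_parent_of_mem hc, ← hwf.parent_eq_none_iff hcK, Option.some_inj]
    simp only [hc, true_and]
    cases hp : (𝒯 (componentWithin G (s \ {r}) c)).parent c with
    | none => simp
    | some p =>
      have hp' := (h𝒯 c hc).1 ▸ (hwf.mem_of_parent_eq_some hp).2.1
      simp only [Option.getD_some, reduceCtorEq, iff_false]
      rintro rfl
      exact (componentWithin_subset hp').2 rfl
  · simp [glue_parent_of_not_mem hc, hc]

theorem mem_componentWithin_of_glue_parent (h𝒯 : IsSearchForestOn G (s \ {r}) 𝒯)
    (h : (glue G s r 𝒯).parent x = some y) (hy : y ≠ r) :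
    x ∈ componentWithin G (s \ {r}) y := by
  have hx : x ∈ s \ {r} := by
    by_contra hx
    simp [glue_parent_of_not_mem hx] at h
  rw [glue_parent_of_mem hx, Option.some_inj] at h
  cases hp : (𝒯 (componentWithin G (s \ {r}) x)).parent x with
  | none => simp [hp] at h; exact absurd h.symm hy
  | some p =>
    rw [hp, Option.getD_some] at h
    subst h
    have hp' := (h𝒯 x hx).1 ▸ ((h𝒯 x hx).2.wf.mem_of_parent_eq_some hp).2.1
    exact componentWithin_eq_of_mem hp' ▸ mem_componentWithin_self hx

theorem mem_componentWithin_of_glue_isAncestor (h𝒯 : IsSearchForestOn G (s \ {r}) 𝒯)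
    (hc : c ∈ s \ {r}) (h : (glue G s r 𝒯).isAncestor c x) :
    x ∈ componentWithin G (s \ {r}) c := by
  induction h using ReflTransGen.head_induction_on with
  | refl => exact mem_componentWithin_self hc
  | @head x y hxy _ ih =>
    have hyr : y ≠ r := fun h => (componentWithin_subset ih).2 h
    exact componentWithin_eq_of_mem ih ▸ mem_componentWithin_of_glue_parent h𝒯 hxy hyr

theorem glue_descendants (h𝒯 : IsSearchForestOn G (s \ {r}) 𝒯)
    (hc : (glue G s r 𝒯).parent c = some r) :
    (glue G s r 𝒯).descendants c = componentWithin G (s \ {r}) c := by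
  obtain ⟨hcs, hcroot⟩ := (glue_parent_eq_root_iff h𝒯).1 hc
  ext z
  refine ⟨fun hz => mem_componentWithin_of_glue_isAncestor h𝒯 hcs hz.2,
    fun hz => ⟨(componentWithin_subset hz).1, ?_⟩⟩
  have hzT := (h𝒯 c hcs).2.wf.2.2.2.2 z (by rw [(h𝒯 c hcs).1]; exact hz)
  rw [← hcroot] at hzT
  exact ReflTransGen.mono (fun _ _ => glue_parentRel_of_parentRel h𝒯 hcs) _ _ hzT

theorem glue_subtreeAt (h𝒯 : IsSearchForestOn G (s \ {r}) 𝒯)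
    (hc : (glue G s r 𝒯).parent c = some r) :
    (glue G s r 𝒯).subtreeAt c = 𝒯 (componentWithin G (s \ {r}) c) := by
  obtain ⟨hcs, hcroot⟩ := (glue_parent_eq_root_iff h𝒯).1 hc
  obtain ⟨hsupp, hTc⟩ := h𝒯 c hcs
  have hdesc := glue_descendants h𝒯 hc
  refine RTree.ext (hdesc.trans hsupp.symm) hcroot (funext fun x => ?_)
  simp only [subtreeAt]
  by_cases hxc : x = c
  · have hcmem : c ∈ (𝒯 (componentWithin G (s \ {r}) c)).supp := by
      rw [hsupp]; exact mem_componentWithin_self hcs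
    rw [if_pos hxc, hxc]
    exact ((hTc.wf.parent_eq_none_iff hcmem).2 hcroot).symm
  rw [if_neg hxc]
  by_cases hx : x ∈ (glue G s r 𝒯).descendants c
  · rw [if_pos hx]
    rw [hdesc] at hx
    obtain ⟨p, hp⟩ := Option.ne_none_iff_exists'.1 fun h =>
      hxc ((hTc.wf.parent_eq_none_iff (hsupp.symm.subset hx)).1 h |>.trans hcroot.symm)
    rw [hp, glue_parent_of_parent_eq_some (componentWithin_subset hx)
      (by rw [componentWithin_eq_of_mem hx]; exact hp)]
  · rw [if_neg hx, hTc.wf.2.2.1 x (by rw [hsupp, ← hdesc]; exact hx)]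

theorem glue_wf (hr : r ∈ s) (h𝒯 : IsSearchForestOn G (s \ {r}) 𝒯) :
    (glue G s r 𝒯).WF := by
  have hr' : r ∉ s \ {r} := fun h => h.2 rfl
  refine ⟨hr, glue_parent_of_not_mem hr', fun v hv => glue_parent_of_not_mem fun h => hv h.1,
    fun v hv hvr => ?_, fun v hv => ?_⟩
  · have hv' : v ∈ s \ {r} := ⟨hv, hvr⟩
    rw [glue_parent_of_mem hv']
    cases hp : (𝒯 (componentWithin G (s \ {r}) v)).parent v with
    | none => exact ⟨r, hr, rfl⟩
    | some p =>
      have hp' := (h𝒯 v hv').1 ▸ ((h𝒯 v hv').2.wf.mem_of_parent_eq_some hp).2.1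
      exact ⟨p, (componentWithin_subset hp').1, rfl⟩
  · by_cases hvr : v = r
    · exact hvr ▸ .refl
    have hv' : v ∈ s \ {r} := ⟨hv, hvr⟩
    obtain ⟨hsupp, hTv⟩ := h𝒯 v hv'
    have hroot : (𝒯 (componentWithin G (s \ {r}) v)).root ∈ componentWithin G (s \ {r}) v :=
      hsupp.subset hTv.wf.1
    have hroot_child :
        (glue G s r 𝒯).parent (𝒯 (componentWithin G (s \ {r}) v)).root = some r :=
      (glue_parent_eq_root_iff h𝒯).2 ⟨componentWithin_subset hroot, by
        rw [componentWithin_eq_of_mem hroot]⟩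
    refine ReflTransGen.tail ?_ hroot_child
    exact ReflTransGen.mono (fun _ _ => glue_parentRel_of_parentRel h𝒯 hv') _ _
      (hTv.wf.2.2.2.2 v (by rw [hsupp]; exact mem_componentWithin_self hv'))

end RTree

theorem isSearchTreeOn_glue {G : SimpleGraph V} {s : Set V} {r : V} {𝒯 : Set V → RTree V}
    (hr : r ∈ s) (hconn : PreconnectedWithin G s) (h𝒯 : IsSearchForestOn G (s \ {r}) 𝒯) :
    IsSearchTreeOn G s (RTree.glue G s r 𝒯) := by
  refine ⟨rfl, .intro _ (RTree.glue_wf hr h𝒯) hconn (fun c hc z => ?_) fun c hc => ?_⟩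
  · rw [RTree.glue_descendants h𝒯 hc]
    exact and_assoc
  · rw [RTree.glue_subtreeAt h𝒯 hc]
    exact (h𝒯 c ((RTree.glue_parent_eq_root_iff h𝒯).1 hc).1).2

section Existence

variable {G : SimpleGraph V}

theorem exists_isSearchTreeOn_star {s : Set V} {r : V} (hr : r ∈ s)
    (hadj : ∀ x ∈ s \ {r}, G.Adj r x)
    (hind : ∀ x ∈ s \ {r}, ∀ y ∈ s \ {r}, ¬ G.Adj x y) :
    ∃ T, IsSearchTreeOn G s T ∧ ∀ x ∈ s \ {r}, T.parent x = some r := by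
  have hreach : ∀ x ∈ s, reachWithin G s r x := by
    intro x hx
    by_cases hxr : x = r
    · exact hxr ▸ .refl
    · exact .single ⟨hr, hx, hadj x ⟨hx, hxr⟩⟩
  have hconn : PreconnectedWithin G s := fun x hx y hy =>
    (reachWithin_symm (hreach x hx)).trans (hreach y hy)
  have : Nonempty (RTree V) := ⟨RTree.singleton r⟩
  have : ∀ K, (∃ v ∈ s \ {r}, componentWithin G (s \ {r}) v = K) →
      ∃ T, IsSearchTreeOn G K T := by
    rintro _ ⟨v, hv, rfl⟩
    exact ⟨_, componentWithin_eq_singleton hv hind ▸ isSearchTreeOn_singleton G v⟩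
  choose! 𝒯 h𝒯 using this
  have hforest : IsSearchForestOn G (s \ {r}) 𝒯 := fun v hv => h𝒯 _ ⟨v, hv, rfl⟩
  refine ⟨_, isSearchTreeOn_glue hr hconn hforest, fun x hx => ?_⟩
  have hKx := componentWithin_eq_singleton hx hind
  obtain ⟨hsupp, hTx⟩ := hforest x hx
  rw [hKx] at hsupp hTx
  have hroot := hTx.wf.1
  rw [hsupp, Set.mem_singleton_iff] at hroot
  rw [RTree.glue_parent_of_mem hx, hKx,
    (hTx.wf.parent_eq_none_iff (by rw [hsupp]; rfl)).2 hroot.symm]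
  rfl

theorem exists_isSearchTreeOn_extending {s t : Set V} (hs : s.Finite)
    (hconn : PreconnectedWithin G s) (hts : t ⊆ s) {T : RTree V} (hT : IsSearchTreeOn G t T) :
    ∃ T', IsSearchTreeOn G s T' ∧ ∀ x y, T.parent x = some y → T'.parent x = some y := by
  induction hn : s.ncard using Nat.strong_induction_on generalizing s t T with
  | _ n ih =>
  by_cases hst : s ⊆ t
  · exact ⟨T, hts.antisymm hst ▸ hT, fun _ _ => id⟩
  obtain ⟨r, hrs, hrt⟩ := Set.not_subset.1 hst
  have hsmall : ∀ v, (componentWithin G (s \ {r}) v).ncard < n := fun v =>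
    hn ▸ (Set.ncard_le_ncard componentWithin_subset (hs.sdiff)).trans_lt
      (Set.ncard_sdiff_singleton_lt_of_mem hrs hs)
  have hrec : ∀ v, ∀ t' ⊆ componentWithin G (s \ {r}) v, ∀ T', IsSearchTreeOn G t' T' →
      ∃ T'', IsSearchTreeOn G (componentWithin G (s \ {r}) v) T'' ∧
        ∀ x y, T'.parent x = some y → T''.parent x = some y := fun v t' ht' T' hT' =>
    ih _ (hsmall v) (hs.sdiff.subset componentWithin_subset) preconnectedWithin_componentWithin
      ht' hT' rfl
  have hroot : T.root ∈ t := hT.1 ▸ hT.2.wf.1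
  have htK : t ⊆ componentWithin G (s \ {r}) T.root := by
    have hts' : t ⊆ s \ {r} := fun y hy => ⟨hts hy, fun h => hrt (h ▸ hy)⟩
    have htconn : PreconnectedWithin G t := hT.1 ▸ hT.2.preconnectedWithin
    exact fun x hx => ⟨hts' hx, reachWithin_mono hts' (htconn _ hroot x hx)⟩
  have : Nonempty (RTree V) := ⟨RTree.singleton r⟩
  have : ∀ K, (∃ v ∈ s \ {r}, componentWithin G (s \ {r}) v = K) →
      ∃ T', IsSearchTreeOn G K T' ∧
        (t ⊆ K → ∀ x y, T.parent x = some y → T'.parent x = some y) := by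
    rintro _ ⟨v, hv, rfl⟩
    by_cases htv : t ⊆ componentWithin G (s \ {r}) v
    · obtain ⟨T', hT', hext⟩ := hrec v t htv T hT
      exact ⟨T', hT', fun _ => hext⟩
    · obtain ⟨T', hT', -⟩ := hrec v {v}
        (Set.singleton_subset_iff.2 (mem_componentWithin_self hv)) _ (isSearchTreeOn_singleton G v)
      exact ⟨T', hT', fun h => absurd h htv⟩
  choose! 𝒯 h𝒯 using this
  refine ⟨_, isSearchTreeOn_glue hrs hconn fun v hv => (h𝒯 _ ⟨v, hv, rfl⟩).1,
    fun x y hxy => ?_⟩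
  have hxK := htK (hT.1 ▸ (hT.2.wf.mem_of_parent_eq_some hxy).1)
  refine RTree.glue_parent_of_parent_eq_some (componentWithin_subset hxK) ?_
  rw [componentWithin_eq_of_mem hxK]
  exact (h𝒯 _ ⟨T.root, (htK hroot).1, rfl⟩).2 htK x y hxy

end Existence

theorem atMostOneChild_iff_simplicial_general {V : Type u} [Fintype V]
    (G : SimpleGraph V) (hG : G.Connected) (w : V) :
    (∀ T : RTree V, IsSearchTree G T →
      ∀ a b, T.parent a = some w → T.parent b = some w → a = b)
    ↔ (∀ a b, G.Adj w a → G.Adj w b → a ≠ b → G.Adj a b) := by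
  refine ⟨fun H a b hwa hwb hab => ?_, fun hsimp T hT a b =>
    hT.2.eq_of_parent_eq_of_simplicial fun a ha b hb => hsimp a b ha hb⟩
  by_contra hnadj
  have hstar : ∀ x ∈ ({w, a, b} : Set V) \ {w}, x = a ∨ x = b := by
    rintro x ⟨hx | hx | hx, hxw⟩ <;> simp_all
  obtain ⟨T, hT, hTpar⟩ := exists_isSearchTreeOn_star (G := G) (s := {w, a, b}) (r := w)
    (by simp)
    (fun x hx => by rcases hstar x hx with rfl | rfl <;> assumption)
    (fun x hx y hy => by
      rcases hstar x hx with rfl | rfl <;> rcases hstar y hy with rfl | rfl <;>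
        simp_all [G.adj_comm])
  obtain ⟨T', hT', hT'par⟩ := exists_isSearchTreeOn_extending Set.finite_univ
    hG.preconnected.preconnectedWithin_univ (Set.subset_univ _) hT
  have hpar : ∀ x ∈ ({w, a, b} : Set V) \ {w}, T'.parent x = some w := fun x hx =>
    hT'par x w (hTpar x hx)
  exact hab (H T' hT' a b (hpar a (by simp [hwa.ne'])) (hpar b (by simp [hwb.ne'])))

/-- `w` has at most one child in every search tree on `G` iff `w` is
simplicial in `G`. -/
theorem atMostOneChild_iff_simplicial {V : Type u} [Fintype V] [Nonempty V]
    (G : SimpleGraph V) (hG : G.Connected) (w : V) :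
    (∀ T : RTree V, IsSearchTree G T →
      ∀ a b, T.parent a = some w → T.parent b = some w → a = b)
    ↔ (∀ a b, G.Adj w a → G.Adj w b → a ≠ b → G.Adj a b) :=
  atMostOneChild_iff_simplicial_general G hG w
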